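/- Let C be a monoidal category, acting on itself by the tensor product (its canonical actegory structure), and let u, v be objects of C. The map sending g : v ⟶ u to the class ⟨(λ_{𝟙}).inv, (λ_v).hom ≫ g | 𝟙⟩ is a bijection from the hom-set (v ⟶ u) to Optic((𝟙, u),(𝟙, v)); its inverse is well defined on the quotient and sends ⟨α, β | m⟩ (with α : 𝟙 ⟶ m ⊗ 𝟙 and β : m ⊗ v ⟶ u) to (λ_v).inv ≫ ((α ≫ (ρ_m).hom) ⊗ 𝟙 v) ≫ β. In particular the functor L embedding morphisms of C as optics with trivial forward part is fully faithful. -/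

import Mathlib

open CategoryTheory MonoidalCategory

variable {C : Type*} [Category C] [MonoidalCategory C]

/-- Representatives of optics (for the canonical self-action of a monoidal category). -/
def OpticRep (x u y v : C) : Type _ :=
  Σ m : C, (x ⟶ m ⊗ y) × (m ⊗ v ⟶ u)

/-- The coend relation: for `f : n ⟶ m`, `α : x ⟶ n ⊗ y`, `β : m ⊗ v ⟶ u`,
`(m, α ≫ (f ⊗ 𝟙 y), β)` is related to `(n, α, (f ⊗ 𝟙 v) ≫ β)`. -/
def OpticRel (x u y v : C) : OpticRep x u y v → OpticRep x u y v → Prop :=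
  fun A B => ∃ f : B.1 ⟶ A.1,
    A.2.1 = B.2.1 ≫ (f ⊗ₘ 𝟙 y) ∧ B.2.2 = (f ⊗ₘ 𝟙 v) ≫ A.2.2

/-- The optic coend `Optic((x,u),(y,v))`. -/
def Optic (x u y v : C) : Type _ := Quot (OpticRel x u y v)

/-!
With trivial forward target `y = 𝟙`, the coend `Optic((x,u),(𝟙,v))` is `x ⊗ v ⟶ u` by the
co-Yoneda lemma: `α : x ⟶ m ⊗ 𝟙` is the same as `f := α ≫ ρ_m : x ⟶ m`, and sliding `f`
across the coend moves every residual `m` to `x` itself, leaving `(f ⊗ 𝟙 v) ≫ β`.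
The theorem is the case `x = 𝟙`, read through `λ_v : 𝟙 ⊗ v ≅ v` and `ρ_𝟙 = λ_𝟙`.
-/

namespace Optic

variable (x u v : C)

def toHom : Optic x u (𝟙_ C) v → (x ⊗ v ⟶ u) :=
  Quot.lift (fun A => ((A.2.1 ≫ (ρ_ A.1).hom) ⊗ₘ 𝟙 v) ≫ A.2.2) <| by
    rintro ⟨m, α, β⟩ ⟨n, α', β'⟩ ⟨f, h, h'⟩
    dsimp only at h h' ⊢
    rw [h, h']
    simp only [tensorHom_id, Category.assoc, rightUnitor_naturality, comp_whiskerRight]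

def ofHom (h : x ⊗ v ⟶ u) : Optic x u (𝟙_ C) v :=
  Quot.mk _ ⟨x, (ρ_ x).inv, h⟩

theorem toHom_ofHom (h : x ⊗ v ⟶ u) : toHom x u v (ofHom x u v h) = h := by
  simp [toHom, ofHom]

theorem ofHom_toHom (q : Optic x u (𝟙_ C) v) : ofHom x u v (toHom x u v q) = q := by
  rcases q with ⟨m, α, β⟩
  refine (Quot.sound ⟨α ≫ (ρ_ m).hom, ?_, rfl⟩).symm
  simp

end Optic

/-- The map `g ↦ ⟨(λ_ 𝟙).inv, (λ_ v).hom ≫ g | 𝟙⟩` is a bijection from `v ⟶ u` to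
`Optic((𝟙,u),(𝟙,v))`; its inverse is well defined on the quotient and sends
`⟨α, β | m⟩` to `(λ_ v).inv ≫ ((α ≫ (ρ_ m).hom) ⊗ 𝟙 v) ≫ β`.
In particular `L` is fully faithful. -/
theorem L_fully_faithful (u v : C) :
    ∃ g : Optic (𝟙_ C) u (𝟙_ C) v → (v ⟶ u),
      (∀ (m : C) (α : 𝟙_ C ⟶ m ⊗ 𝟙_ C) (β : m ⊗ v ⟶ u),
        g (Quot.mk (OpticRel (𝟙_ C) u (𝟙_ C) v) ⟨m, α, β⟩) =
          (λ_ v).inv ≫ ((α ≫ (ρ_ m).hom) ⊗ₘ 𝟙 v) ≫ β) ∧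
      Function.LeftInverse g
        (fun k : v ⟶ u =>
          Quot.mk (OpticRel (𝟙_ C) u (𝟙_ C) v) ⟨𝟙_ C, (λ_ (𝟙_ C)).inv, (λ_ v).hom ≫ k⟩) ∧
      Function.RightInverse g
        (fun k : v ⟶ u =>
          Quot.mk (OpticRel (𝟙_ C) u (𝟙_ C) v) ⟨𝟙_ C, (λ_ (𝟙_ C)).inv, (λ_ v).hom ≫ k⟩) := by
  have L_eq_ofHom (k : v ⟶ u) : Quot.mk (OpticRel (𝟙_ C) u (𝟙_ C) v)
      ⟨𝟙_ C, (λ_ (𝟙_ C)).inv, (λ_ v).hom ≫ k⟩ = Optic.ofHom (𝟙_ C) u v ((λ_ v).hom ≫ k) := by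
    rw [Optic.ofHom, unitors_inv_equal]
  refine ⟨fun q => (λ_ v).inv ≫ Optic.toHom (𝟙_ C) u v q, fun _ _ _ => rfl, ?_, ?_⟩
  · intro k
    dsimp only
    rw [L_eq_ofHom, Optic.toHom_ofHom, Iso.inv_hom_id_assoc]
  · intro q
    dsimp only
    rw [L_eq_ofHom, Iso.hom_inv_id_assoc, Optic.ofHom_toHom]
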